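/- arXiv:1605.07745 — 7 statements merged into one kernel-verified Lean document; each statement's English description precedes it below -/
import Mathlib

section
/- Let (φ_i : U_i → V_i)_{i∈I} be an atlas of a set M modelled on a set V, i.e. a family of charts satisfying (1) φ_i = φ_j implies i = j, (2) M = ⋃_{i∈I} U_i, and (3) whenever U_i ∩ U_j ≠ ∅ there exists k ∈ I with U_k = U_i ∩ U_j and φ_k(y) = φ_i(y) for all y ∈ U_k. Then (I, E, ≤) satisfies the e-pos axiom: whenever i' ≤ i and E i j, there exists a unique j' ∈ I with E i' j' and j' ≤ j. -/
-- Charts of a set `M` modelled on `V` are encoded as `PartialEquiv M V`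
-- (bijections from `source ⊆ M` onto `target ⊆ V`).

/-- The relation `E`: two charts have the same domain. -/
def chartE {M V I : Type*} (Φ : I → PartialEquiv M V) (i j : I) : Prop :=
  (Φ i).source = (Φ j).source

/-- The relation `≤`: the chart `i'` is a restriction of the chart `i`. -/
def chartLE {M V I : Type*} (Φ : I → PartialEquiv M V) (i' i : I) : Prop :=
  (Φ i').source ⊆ (Φ i).source ∧ ∀ y ∈ (Φ i').source, Φ i' y = Φ i y

/-- For an atlas (no repetition, covering, closed under
intersection/restriction of charts), the triple `(I, E, ≤)` satisfies the
e-pos axiom: if `i' ≤ i` and `E i j`, there is a unique `j'` with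
`E i' j'` and `j' ≤ j`. -/
theorem epos_of_atlas {M V I : Type*} (Φ : I → PartialEquiv M V)
    (hnorep : ∀ i j : I, (Φ i).source = (Φ j).source →
      (∀ x ∈ (Φ i).source, Φ i x = Φ j x) → i = j)
    (hcover : ∀ x : M, ∃ i : I, x ∈ (Φ i).source)
    (hinter : ∀ i j : I, ((Φ i).source ∩ (Φ j).source).Nonempty →
      ∃ k : I, (Φ k).source = (Φ i).source ∩ (Φ j).source ∧
        ∀ y ∈ (Φ k).source, Φ k y = Φ i y) :
    ∀ i' i j : I, chartLE Φ i' i → chartE Φ i j →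
      ∃! j' : I, chartE Φ i' j' ∧ chartLE Φ j' j := by
  intro i' i j hle hE
  obtain ⟨hsub, hval⟩ := hle
  rcases Set.eq_empty_or_nonempty (Φ i').source with hemp | hne
  · refine ⟨i', ⟨rfl, by simp [chartLE, hemp]⟩, ?_⟩
    rintro k ⟨hkE, _⟩
    exact hnorep k i' hkE.symm (by rw [hkE.symm, hemp] at *; simp)
  · have hsubj : (Φ i').source ⊆ (Φ j).source := hE ▸ hsub
    obtain ⟨k, hks, hkv⟩ := hinter j i'
      (by rwa [Set.inter_eq_right.mpr hsubj])
    rw [Set.inter_eq_right.mpr hsubj] at hks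
    refine ⟨k, ⟨hks.symm, hks ▸ hsubj, fun y hy => hkv y hy⟩, ?_⟩
    rintro m ⟨hmE, hmsub, hmval⟩
    refine hnorep m k (hmE.symm.trans hks.symm) fun x hx => ?_
    rw [hmval x hx, hkv x (by rw [hks, show (Φ i').source = (Φ m).source from hmE]; exact hx)]
end

section
/- Let (φ_i : U_i → V_i)_{i∈I} be an atlas of a set M modelled on a set V, i.e. a family of charts satisfying (1) φ_i = φ_j implies i = j, (2) M = ⋃_{i∈I} U_i, and (3) whenever U_i ∩ U_j ≠ ∅ there exists k ∈ I with U_k = U_i ∩ U_j and φ_k(y) = φ_i(y) for all y ∈ U_k. If i ≤ m, j ≤ m and V_i ∩ V_j ≠ ∅, then there exists a unique k ∈ I with k ≤ i, k ≤ j and V_k = V_i ∩ V_j. -/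
/-- For an atlas, if `i ≤ m`, `j ≤ m` and `V_i ∩ V_j ≠ ∅`, there
is a unique `k` with `k ≤ i`, `k ≤ j` and `V_k = V_i ∩ V_j`. -/
theorem meet_of_atlas {M V I : Type*} (Φ : I → PartialEquiv M V)
    (hnorep : ∀ i j : I, (Φ i).source = (Φ j).source →
      (∀ x ∈ (Φ i).source, Φ i x = Φ j x) → i = j)
    (hcover : ∀ x : M, ∃ i : I, x ∈ (Φ i).source)
    (hinter : ∀ i j : I, ((Φ i).source ∩ (Φ j).source).Nonempty →
      ∃ k : I, (Φ k).source = (Φ i).source ∩ (Φ j).source ∧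
        ∀ y ∈ (Φ k).source, Φ k y = Φ i y) :
    ∀ i j m : I, chartLE Φ i m → chartLE Φ j m →
      ((Φ i).target ∩ (Φ j).target).Nonempty →
      ∃! k : I, chartLE Φ k i ∧ chartLE Φ k j ∧
        (Φ k).target = (Φ i).target ∩ (Φ j).target := by
  intro i j m him hjm htgt
  -- agreement of φ_i and φ_j on U_i ∩ U_j
  have hagree : ∀ x, x ∈ (Φ i).source → x ∈ (Φ j).source → Φ i x = Φ j x := by
    intro x hxi hxj
    rw [him.2 x hxi, hjm.2 x hxj]
  -- key: for v ∈ V_i ∩ V_j, the preimages agree and lie in U_i ∩ U_j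
  have hsymm : ∀ v ∈ (Φ i).target ∩ (Φ j).target,
      (Φ i).symm v ∈ (Φ i).source ∩ (Φ j).source ∧ (Φ i).symm v = (Φ j).symm v := by
    intro v ⟨hvi, hvj⟩
    have hxi : (Φ i).symm v ∈ (Φ i).source := (Φ i).symm_mapsTo hvi
    have hxj : (Φ j).symm v ∈ (Φ j).source := (Φ j).symm_mapsTo hvj
    have h1 : Φ m ((Φ i).symm v) = v := by
      rw [← him.2 _ hxi]; exact (Φ i).right_inv hvi
    have h2 : Φ m ((Φ j).symm v) = v := by
      rw [← hjm.2 _ hxj]; exact (Φ j).right_inv hvj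
    have heq : (Φ i).symm v = (Φ j).symm v :=
      (Φ m).injOn (him.1 hxi) (hjm.1 hxj) (h1.trans h2.symm)
    exact ⟨⟨hxi, heq ▸ hxj⟩, heq⟩
  obtain ⟨v, hv⟩ := htgt
  have hne : ((Φ i).source ∩ (Φ j).source).Nonempty :=
    ⟨(Φ i).symm v, (hsymm v hv).1⟩
  obtain ⟨k, hks, hkf⟩ := hinter i j hne
  have hki : chartLE Φ k i := ⟨by rw [hks]; exact Set.inter_subset_left, hkf⟩
  have hkj : chartLE Φ k j := by
    refine ⟨by rw [hks]; exact Set.inter_subset_right, fun y hy => ?_⟩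
    have hy' := hks ▸ hy
    rw [hkf y hy, hagree y hy'.1 hy'.2]
  have hktgt : (Φ k).target = (Φ i).target ∩ (Φ j).target := by
    rw [← (Φ k).image_source_eq_target]
    apply Set.Subset.antisymm
    · rintro _ ⟨x, hx, rfl⟩
      have hx' := hks ▸ hx
      constructor
      · rw [hkf x hx]; exact (Φ i).mapsTo hx'.1
      · rw [hkj.2 x hx]; exact (Φ j).mapsTo hx'.2
    · intro w hw
      obtain ⟨hxij, _⟩ := hsymm w hw
      refine ⟨(Φ i).symm w, hks ▸ hxij, ?_⟩
      rw [hkf _ (hks ▸ hxij)]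
      exact (Φ i).right_inv hw.1
  refine ⟨k, ⟨hki, hkj, hktgt⟩, ?_⟩
  rintro k' ⟨hk'i, hk'j, hk'tgt⟩
  -- show sources are equal
  have hsrc : (Φ k').source = (Φ k).source := by
    apply Set.Subset.antisymm
    · intro x hx
      rw [hks]; exact ⟨hk'i.1 hx, hk'j.1 hx⟩
    · intro x hx
      have hx' := hks ▸ hx
      -- Φ k x ∈ target k' ; pull back
      have hvk : Φ i x ∈ (Φ k').target := by
        rw [hk'tgt]
        exact ⟨(Φ i).mapsTo hx'.1, by rw [hagree x hx'.1 hx'.2]; exact (Φ j).mapsTo hx'.2⟩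
      have hy : (Φ k').symm (Φ i x) ∈ (Φ k').source := (Φ k').symm_mapsTo hvk
      have : Φ i ((Φ k').symm (Φ i x)) = Φ i x := by
        rw [← hk'i.2 _ hy]; exact (Φ k').right_inv hvk
      have hxx : (Φ k').symm (Φ i x) = x :=
        (Φ i).injOn (hk'i.1 hy) hx'.1 this
      exact hxx ▸ hy
  exact hnorep k' k hsrc (fun x hx => by
    rw [hk'i.2 x hx, hkf x (hsrc ▸ hx)])
end

section
/- In any e-pos (I, E, ≤): if i ≤ j and E i j, then i = j. -/
/-- In any e-pos `(I, E, ≤)` (an equivalence relation `E` and a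
partial order `le` satisfying the axiom (Epos)): if `i ≤ j` and `E i j`,
then `i = j`. -/
theorem epos_le_and_equiv_imp_eq {I : Type*} (E le : I → I → Prop)
    (hE : Equivalence E)
    (hrefl : ∀ i : I, le i i)
    (htrans : ∀ i j k : I, le i j → le j k → le i k)
    (hantisymm : ∀ i j : I, le i j → le j i → i = j)
    (hepos : ∀ i' i j : I, le i' i → E i j → ∃! j' : I, E i' j' ∧ le j' j) :
    ∀ i j : I, le i j → E i j → i = j := by
  intro i j hle hij
  obtain ⟨j', _, huniq⟩ := hepos i j j hle (hE.refl j)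
  exact (huniq i ⟨hE.refl i, hle⟩).trans (huniq j ⟨hij, hrefl j⟩).symm
end

section
/- In any e-pos (I, E, ≤), the composed relation H on I defined by H i k iff there exists j ∈ I with E i j and j ≤ k is transitive: if H i k and H k n then H i n. -/
/-- In any e-pos `(I, E, ≤)`, the composed relation
`H i k := ∃ j, E i j ∧ j ≤ k` is transitive. -/
theorem epos_composed_relation_transitive {I : Type*} (E le : I → I → Prop)
    (hE : Equivalence E)
    (hrefl : ∀ i : I, le i i)
    (htrans : ∀ i j k : I, le i j → le j k → le i k)
    (hantisymm : ∀ i j : I, le i j → le j i → i = j)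
    (hepos : ∀ i' i j : I, le i' i → E i j → ∃! j' : I, E i' j' ∧ le j' j) :
    ∀ i k n : I, (∃ j : I, E i j ∧ le j k) → (∃ j : I, E k j ∧ le j n) →
      ∃ j : I, E i j ∧ le j n := by
  intro i k n ⟨j, hij, hjk⟩ ⟨m, hkm, hmn⟩
  obtain ⟨j', ⟨hjj', hj'm⟩, -⟩ := hepos j k m hjk hkm
  exact ⟨j', hE.trans hij hjj', htrans _ _ _ hj'm hmn⟩
end

section
/- Given atlas data modelled on a set V with chart index an e-pos (I, E, ≤), the relation ∼ on S := {(x,i) ∈ V × I | x ∈ V_i}, defined by (x,i) ∼ (y,j) iff there exist i' ≤ i and j' ≤ j with E i' j', x ∈ V_{i'}, y ∈ V_{j'} and φ_{i'j'}(y) = x, is an equivalence relation (reflexive, symmetric, and transitive). -/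
universe u v

/-- Atlas data modelled on a set `V` with chart index an e-pos `(I, E, ≤)`:
chart ranges `Vs i ⊆ V` and transition bijections `t i j : Vs j → Vs i` for
`E i j`, subject to the axioms of Definition of atlas data. -/
structure AtlasData (V : Type u) (I : Type v) where
  /-- the equivalence relation of the e-pos -/
  E : I → I → Prop
  /-- the partial order of the e-pos -/
  le : I → I → Prop
  /-- the chart ranges `V_i ⊆ V` -/
  Vs : I → Set V
  /-- the transition maps `φ_{ij}` (as total maps on `V`) -/
  t : I → I → V → V
  equivE : Equivalence E
  le_refl : ∀ i, le i i
  le_trans : ∀ i j k, le i j → le j k → le i k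
  le_antisymm : ∀ i j, le i j → le j i → i = j
  /-- the e-pos axiom (Epos) -/
  epos : ∀ i' i j, le i' i → E i j → ∃! j', E i' j' ∧ le j' j
  /-- `φ_{ij}` is a bijection from `V_j` onto `V_i` -/
  bijOn : ∀ i j, E i j → Set.BijOn (t i j) (Vs j) (Vs i)
  /-- `φ_{ii} = id` on `V_i` -/
  t_id : ∀ i, ∀ x ∈ Vs i, t i i x = x
  /-- `φ_{ij} ∘ φ_{jk} = φ_{ik}` -/
  t_comp : ∀ i j k, E i j → E j k → ∀ x ∈ Vs k, t i j (t j k x) = t i k x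
  /-- `φ_{ij}⁻¹ = φ_{ji}` -/
  t_symm : ∀ i j, E i j → Set.InvOn (t j i) (t i j) (Vs j) (Vs i)
  /-- if `i' ≤ i` then `V_{i'} ⊆ V_i` -/
  mono : ∀ i' i, le i' i → Vs i' ⊆ Vs i
  /-- transition maps of restricted charts are restrictions of transition maps -/
  compat : ∀ i j i' j', E i j → E i' j' → le i' i → le j' j →
    ∀ x ∈ Vs j', t i' j' x = t i j x
  /-- existence and uniqueness of intersections -/
  meet : ∀ i j m, le i m → le j m → (Vs i ∩ Vs j).Nonempty →
    ∃! k, le k i ∧ le k j ∧ Vs k = Vs i ∩ Vs j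

/-- The gluing relation `∼` on (pairs underlying) `S = {(x,i) | x ∈ V_i}`:
`(x,i) ∼ (y,j)` iff there are `i' ≤ i`, `j' ≤ j` with `E i' j'`, `x ∈ V_{i'}`,
`y ∈ V_{j'}` and `φ_{i'j'}(y) = x`. -/
def AtlasData.rel {V : Type u} {I : Type v} (D : AtlasData V I) (p q : V × I) : Prop :=
  ∃ i' j', D.le i' p.2 ∧ D.le j' q.2 ∧ D.E i' j' ∧
    p.1 ∈ D.Vs i' ∧ q.1 ∈ D.Vs j' ∧ D.t i' j' q.1 = p.1

/-- the relation `∼` is an equivalence relation on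
`S = {(x,i) ∈ V × I | x ∈ V_i}`. -/
theorem atlasData_rel_equivalence {V : Type u} {I : Type v} (D : AtlasData V I) :
    Equivalence (fun p q : {p : V × I // p.1 ∈ D.Vs p.2} => D.rel p.val q.val) := by
  constructor
  · rintro ⟨⟨x, i⟩, hx⟩
    exact ⟨i, i, D.le_refl i, D.le_refl i, D.equivE.refl i, hx, hx, D.t_id i x hx⟩
  · rintro ⟨⟨x, i⟩, hx⟩ ⟨⟨y, j⟩, hy⟩ ⟨i', j', hi, hj, hE, hx', hy', ht⟩
    refine ⟨j', i', hj, hi, D.equivE.symm hE, hy', hx', ?_⟩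
    have := (D.t_symm i' j' hE).1 hy'
    rw [ht] at this; exact this
  · rintro ⟨⟨x, i⟩, hx⟩ ⟨⟨y, j⟩, hy⟩ ⟨⟨z, k⟩, hz⟩
      ⟨i₁, j₁, hi₁, hj₁, hE₁, hx₁, hy₁, ht₁⟩ ⟨j₂, k₂, hj₂, hk₂, hE₂, hy₂, hz₂, ht₂⟩
    obtain ⟨m, ⟨hm1, hm2, hVm⟩, -⟩ :=
      D.meet j₁ j₂ j hj₁ hj₂ ⟨y, hy₁, hy₂⟩
    have hym : y ∈ D.Vs m := hVm ▸ ⟨hy₁, hy₂⟩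
    obtain ⟨i₂, ⟨hEmi₂, hi₂⟩, -⟩ := D.epos m j₁ i₁ hm1 (D.equivE.symm hE₁)
    obtain ⟨k₃, ⟨hEmk₃, hk₃⟩, -⟩ := D.epos m j₂ k₂ hm2 hE₂
    have hEi₂m := D.equivE.symm hEmi₂
    have hEk₃m := D.equivE.symm hEmk₃
    -- x ∈ Vs i₂
    have hxm : D.t i₂ m y = x := by
      rw [D.compat i₁ j₁ i₂ m hE₁ hEi₂m hi₂ hm1 y hym, ht₁]
    have hxi₂ : x ∈ D.Vs i₂ := hxm ▸ (D.bijOn i₂ m hEi₂m).mapsTo hym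
    -- z ∈ Vs k₃ via z' = t k₃ m y
    set z' := D.t k₃ m y with hz'
    have hz'k₃ : z' ∈ D.Vs k₃ := (D.bijOn k₃ m hEk₃m).mapsTo hym
    have hz'eq : z' = z := by
      apply (D.bijOn j₂ k₂ hE₂).injOn (D.mono k₃ k₂ hk₃ hz'k₃) hz₂
      rw [← D.compat j₂ k₂ m k₃ hE₂ hEmk₃ hm2 hk₃ z' hz'k₃, hz',
        (D.t_symm m k₃ hEmk₃).2 hym, ht₂]
    have hzk₃ : z ∈ D.Vs k₃ := hz'eq ▸ hz'k₃
    refine ⟨i₂, k₃, D.le_trans i₂ i₁ i hi₂ hi₁, D.le_trans k₃ k₂ k hk₃ hk₂,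
      D.equivE.trans hEi₂m hEmk₃, hxi₂, hzk₃, ?_⟩
    rw [← D.t_comp i₂ m k₃ hEi₂m hEmk₃ z hzk₃, ← hz'eq, hz',
      (D.t_symm m k₃ hEmk₃).2 hym, hxm]
end

section
/- Given atlas data modelled on a set V with chart index an e-pos (I, E, ≤), and the equivalence relation ∼ on S := {(x,i) ∈ V × I | x ∈ V_i} defined by (x,i) ∼ (y,j) iff there exist i' ≤ i, j' ≤ j with E i' j', x ∈ V_{i'}, y ∈ V_{j'}, φ_{i'j'}(y) = x: (a) for each i ∈ I, the map V_i → S/∼ sending x to the class [(x,i)] is injective (i.e. (x,i) ∼ (y,i) implies x = y); (b) whenever E i j and y ∈ V_j, one has [(y,j)] = [(φ_{ij}(y), i)]; consequently, setting U_i := {[(x,i)] : x ∈ V_i}, each φ_i : U_i → V_i, [(x,i)] ↦ x, is a well-defined bijection whose transition maps φ_i ∘ φ_j⁻¹ coincide with the given φ_{ij} on E-related pairs. -/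
universe u v

/-- The setoid on `S = {(x,i) | x ∈ V_i}` induced by `∼`, given a proof that
`∼` is an equivalence relation. -/
def AtlasData.setoid {V : Type u} {I : Type v} (D : AtlasData V I)
    (heq : Equivalence (fun p q : {p : V × I // p.1 ∈ D.Vs p.2} => D.rel p.val q.val)) :
    Setoid {p : V × I // p.1 ∈ D.Vs p.2} :=
  ⟨fun p q => D.rel p.val q.val, heq⟩

/-- (a) for each `i`, the map `V_i → S/∼`, `x ↦ [(x,i)]`, is
injective; (b) whenever `E i j` and `y ∈ V_j`, one has
`[(y,j)] = [(φ_{ij}(y), i)]`.  Consequently the charts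
`φ_i : U_i → V_i, [(x,i)] ↦ x` of the quotient are well-defined bijections
whose transition maps are the given `φ_{ij}`. -/
theorem atlasData_quotient_charts {V : Type u} {I : Type v} (D : AtlasData V I)
    (heq : Equivalence (fun p q : {p : V × I // p.1 ∈ D.Vs p.2} => D.rel p.val q.val)) :
    (∀ (i : I) (x y : V) (hx : x ∈ D.Vs i) (hy : y ∈ D.Vs i),
      Quotient.mk (D.setoid heq) ⟨(x, i), hx⟩ =
        Quotient.mk (D.setoid heq) ⟨(y, i), hy⟩ → x = y) ∧
    (∀ (i j : I) (hij : D.E i j) (y : V) (hy : y ∈ D.Vs j),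
      Quotient.mk (D.setoid heq) ⟨(y, j), hy⟩ =
        Quotient.mk (D.setoid heq) ⟨(D.t i j y, i), (D.bijOn i j hij).mapsTo hy⟩) := by
  constructor
  · intro i x y hx hy h
    obtain ⟨i', j', hi', hj', hE, hxi, hyj, ht⟩ : D.rel (x, i) (y, i) := Quotient.exact h
    obtain ⟨w, -, hu⟩ := D.epos i' i i hi' (D.equivE.refl i)
    have h1 : i' = j' :=
      (hu i' ⟨D.equivE.refl i', hi'⟩).trans (hu j' ⟨hE, hj'⟩).symm
    subst h1
    rw [D.t_id i' y hyj] at ht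
    exact ht.symm
  · intro i j hij y hy
    exact Quotient.sound ⟨j, i, D.le_refl j, D.le_refl i, D.equivE.symm hij, hy,
      (D.bijOn i j hij).mapsTo hy, (D.t_symm i j hij).1 hy⟩
end

section
/- Given atlas data modelled on a topological space V with chart index an e-pos (I, E, ≤), where each V_i is open in V and each φ_{ij} is a homeomorphism, endow M := S/∼ with the final topology with respect to the maps V_i → M, x ↦ [(x,i)]. Then for every j ∈ I and every open subset W ⊆ V_j, the set {[(y,j)] : y ∈ W} is open in M; equivalently, for every i ∈ I the set {x ∈ V_i : ∃ y ∈ W, (x,i) ∼ (y,j)} is open in V. In particular each chart bijection φ_j : U_j → V_j, [(x,j)] ↦ x, is a homeomorphism onto V_j, where U_j := {[(x,j)] : x ∈ V_j}. -/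
universe u v

open Topology

/-- for topological atlas data (all `V_i` open, all `φ_{ij}`
homeomorphisms), endowing `M = S/∼` with the final topology with respect to
the maps `V_i → M, x ↦ [(x,i)]`: for every `j` and every open `W ⊆ V_j`, the
set `{[(y,j)] : y ∈ W}` is open in `M`; equivalently, for every `i` the set
`{x ∈ V_i : ∃ y ∈ W, (x,i) ∼ (y,j)}` is open in `V`.  (In particular each
chart bijection `φ_j : U_j → V_j` is a homeomorphism.) -/
theorem atlasData_quotient_charts_open {V : Type u} [TopologicalSpace V]
    {I : Type v} (D : AtlasData V I)
    (hVopen : ∀ i : I, IsOpen (D.Vs i))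
    (hcont : ∀ i j : I, D.E i j → ContinuousOn (D.t i j) (D.Vs j))
    (heq : Equivalence (fun p q : {p : V × I // p.1 ∈ D.Vs p.2} => D.rel p.val q.val)) :
    ∀ (j : I) (W : Set V), W ⊆ D.Vs j → IsOpen W →
      (IsOpen[⨆ i : I, TopologicalSpace.coinduced
          (fun x : D.Vs i => Quotient.mk (D.setoid heq) ⟨(x.val, i), x.property⟩)
          inferInstance]
        {m : Quotient (D.setoid heq) |
          ∃ y, ∃ hy : y ∈ D.Vs j, y ∈ W ∧ m = Quotient.mk (D.setoid heq) ⟨(y, j), hy⟩}) ∧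
      (∀ i : I, IsOpen {x : V | x ∈ D.Vs i ∧ ∃ y ∈ W, D.rel (x, i) (y, j)}) := by

  intro j W hWsub hWopen
  have hS : ∀ i : I, IsOpen {x : V | x ∈ D.Vs i ∧ ∃ y ∈ W, D.rel (x, i) (y, j)} := by
    intro i
    have hset : {x : V | x ∈ D.Vs i ∧ ∃ y ∈ W, D.rel (x, i) (y, j)} =
        ⋃ i' : I, ⋃ j' : I, ⋃ _ : D.le i' i ∧ D.le j' j ∧ D.E i' j',
          (D.Vs i' ∩ (D.t j' i') ⁻¹' W) := by
      ext x
      simp only [Set.mem_setOf_eq, Set.mem_iUnion, Set.mem_inter_iff, Set.mem_preimage]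
      constructor
      · rintro ⟨-, y, hyW, i', j', hle1, hle2, hE, hxv, hyv, hty⟩
        refine ⟨i', j', ⟨hle1, hle2, hE⟩, hxv, ?_⟩
        have := (D.t_symm i' j' hE).1 hyv
        rw [hty] at this
        rw [this]; exact hyW
      · rintro ⟨i', j', ⟨hle1, hle2, hE⟩, hxv, htW⟩
        have hyv : D.t j' i' x ∈ D.Vs j' := (D.bijOn j' i' (D.equivE.symm hE)).1 hxv
        have hback : D.t i' j' (D.t j' i' x) = x := (D.t_symm i' j' hE).2 hxv
        exact ⟨D.mono i' i hle1 hxv, D.t j' i' x, htW,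
          i', j', hle1, hle2, hE, hxv, hyv, hback⟩
    rw [hset]
    refine isOpen_iUnion fun i' => isOpen_iUnion fun j' => isOpen_iUnion ?_
    rintro ⟨hle1, hle2, hE⟩
    exact (hcont j' i' (D.equivE.symm hE)).isOpen_inter_preimage (hVopen i') hWopen
  refine ⟨?_, hS⟩
  rw [isOpen_iSup_iff]
  intro i
  rw [isOpen_coinduced]
  have hpre : (fun x : D.Vs i => Quotient.mk (D.setoid heq) ⟨(x.val, i), x.property⟩) ⁻¹'
      {m : Quotient (D.setoid heq) |
        ∃ y, ∃ hy : y ∈ D.Vs j, y ∈ W ∧ m = Quotient.mk (D.setoid heq) ⟨(y, j), hy⟩} =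
      Subtype.val ⁻¹' {x : V | x ∈ D.Vs i ∧ ∃ y ∈ W, D.rel (x, i) (y, j)} := by
    ext x
    simp only [Set.mem_preimage, Set.mem_setOf_eq]
    constructor
    · rintro ⟨y, hy, hyW, hmk⟩
      exact ⟨x.property, y, hyW, Quotient.exact hmk⟩
    · rintro ⟨-, y, hyW, hrel⟩
      exact ⟨y, hWsub hyW, hyW, Quotient.sound hrel⟩
  rw [hpre]
  exact (hS i).preimage continuous_subtype_val
end
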